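/- For every n ≥ 1, the descent polynomials P_n(α,t) = Σ_{σ ∈ S_{n+1}} α^{des(σ)}·t^{n−des(σ)} = Σ_{k=0}^{n} A(n+1,k)·α^k·t^{n-k} satisfy the recurrence P_n(α,t) = (α+t)·P_{n-1}(α,t) + αt·Σ_{i=1}^{n-1} binom(n,i)·P_{i-1}(α,t)·P_{n-i-1}(α,t), with P_0 = 1. (This is the inductive formula for the H-polynomial of the permutohedron Pe^n.) -/

import Mathlib

open Finset MvPolynomial
open scoped Classical

/-- The number of descents of a permutation `σ` of `Fin m` (viewed as a permutation of
`{1,…,m}`): the number of indices `i` with `i+1 < m` and `σ(i) > σ(i+1)`. -/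
noncomputable def numDescents (m : ℕ) (σ : Equiv.Perm (Fin m)) : ℕ :=
  ((Finset.range m).filter fun i =>
    ∃ h : i + 1 < m, σ ⟨i + 1, h⟩ < σ ⟨i, Nat.lt_of_succ_lt h⟩).card

/-- The Eulerian number `A(m,k)`: the number of permutations of `{1,…,m}` with exactly
`k` descents. -/
noncomputable def eulerian (m k : ℕ) : ℕ :=
  ((Finset.univ : Finset (Equiv.Perm (Fin m))).filter fun σ => numDescents m σ = k).card

/-- The h-polynomial of the permutohedron `Pe^n` (descent polynomial):
`P_n(α,t) = Σ_{σ ∈ S_{n+1}} α^{des σ}·t^{n-des σ} = Σ_{k=0}^{n} A(n+1,k)·α^k·t^{n-k}`. -/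
noncomputable def permutoH (n : ℕ) : MvPolynomial (Fin 2) ℚ :=
  ∑ k ∈ Finset.range (n + 1),
    MvPolynomial.C ((eulerian (n + 1) k : ℚ)) *
      MvPolynomial.X 0 ^ k * MvPolynomial.X 1 ^ (n - k)

/-!
Cut a permutation of `{0, …, n}` at its largest value `n`. It is determined by the set `S` of
values to the left of `n` together with the standardisations `π ∈ S_{|S|}` and `ρ ∈ S_{n-|S|}` of
the words on either side of `n`. Since `n` exceeds every other letter, the descents of the
permutation are those of `π`, those of `ρ`, and one more (at `n`) unless `n` comes last; dually,
its ascents are those of `π` and `ρ` plus one unless `n` comes first. Summing over the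
`binom(n, k)` sets `S` of size `k` gives the term `binom(n, k) α t P_{k-1} P_{n-k-1}` for
`0 < k < n`, while `k = 0` and `k = n` give `α P_{n-1}` and `t P_{n-1}`.
-/

open Equiv
open scoped Nat

namespace List

variable {α β : Type*} [LinearOrder α] [LinearOrder β]

def descents : List α → ℕ
  | a :: b :: l => (if b < a then 1 else 0) + descents (b :: l)
  | _ => 0

theorem descents_le_length_sub_one : ∀ l : List α, l.descents ≤ l.length - 1
  | [] | [_] => by simp [descents]
  | a :: b :: l => by
    have := descents_le_length_sub_one (b :: l)
    simp only [descents, length_cons] at this ⊢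
    split_ifs <;> omega

theorem descents_map {g : α → β} (hg : StrictMono g) : ∀ l : List α, (l.map g).descents = l.descents
  | [] | [_] => rfl
  | a :: b :: l => by
    rw [map_cons, map_cons, descents, ← map_cons, descents_map hg (b :: l), descents]
    simp only [hg.lt_iff_lt]

theorem descents_append_cons (a : α) (l₂ : List α) : ∀ l₁ : List α,
    (l₁ ++ a :: l₂).descents = (l₁ ++ [a]).descents + (a :: l₂).descents
  | [] => by simp [descents]
  | [x] => by simp [descents]
  | x :: y :: l₁ => by
    have ih := descents_append_cons a l₂ (y :: l₁)
    simp only [cons_append] at ih ⊢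
    simp only [descents, ih, add_assoc]

theorem descents_append_singleton_of_forall_lt {a : α} :
    ∀ {l : List α}, (∀ b ∈ l, b < a) → (l ++ [a]).descents = l.descents
  | [], _ => rfl
  | [x], h => by simp [descents, (h x (by simp)).not_gt]
  | x :: y :: l, h => by
    have ih := descents_append_singleton_of_forall_lt fun z hz => h z (mem_cons_of_mem x hz)
    simp only [cons_append] at ih ⊢
    simp only [descents, ih]

theorem descents_cons_of_forall_lt {a : α} {l : List α} (h : ∀ b ∈ l, b < a) :
    (a :: l).descents = l.descents + if l = [] then 0 else 1 := by
  cases l with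
  | nil => rfl
  | cons b l => simp [descents, h b (by simp), add_comm]

theorem descents_append_cons_of_forall_lt {a : α} {l₁ l₂ : List α} (h₁ : ∀ b ∈ l₁, b < a)
    (h₂ : ∀ b ∈ l₂, b < a) :
    (l₁ ++ a :: l₂).descents = l₁.descents + l₂.descents + if l₂ = [] then 0 else 1 := by
  rw [descents_append_cons, descents_append_singleton_of_forall_lt h₁,
    descents_cons_of_forall_lt h₂, add_assoc]

theorem descents_ofFn {m : ℕ} (f : Fin m → α) : (ofFn f).descents =
    #{i ∈ Finset.range m | ∃ h : i + 1 < m, f ⟨i + 1, h⟩ < f ⟨i, Nat.lt_of_succ_lt h⟩} := by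
  induction m with
  | zero => simp [descents]
  | succ m ih =>
    rw [ofFn_succ, Finset.card_filter, Finset.sum_range_succ']
    cases m with
    | zero =>
      rw [if_neg fun ⟨h, _⟩ => (lt_irrefl 1 h).elim]
      simp [descents]
    | succ m =>
      have htail := ofFn_succ (f := fun i : Fin (m + 1) => f i.succ)
      rw [htail, descents, ← htail, ih, Finset.card_filter, add_comm]
      congr 1
      · simp only [Fin.succ_mk, add_lt_add_iff_right]
      · exact if_congr (by simp) rfl rfl

variable {M : Type*} [CommMonoid M] (x y : M)

-- For a word with distinct letters, `length - 1 - descents` is its number of ascents.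
def descentWeight (l : List α) : M := x ^ l.descents * y ^ (l.length - 1 - l.descents)

theorem descentWeight_map {g : α → β} (hg : StrictMono g) (l : List α) :
    (l.map g).descentWeight x y = l.descentWeight x y := by
  rw [descentWeight, descentWeight, descents_map hg, length_map]

theorem descentWeight_append_cons_of_forall_lt {a : α} {l₁ l₂ : List α} (h₁ : ∀ b ∈ l₁, b < a)
    (h₂ : ∀ b ∈ l₂, b < a) :
    (l₁ ++ a :: l₂).descentWeight x y =
      (if l₂ = [] then 1 else x) * (if l₁ = [] then 1 else y) *
        l₁.descentWeight x y * l₂.descentWeight x y := by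
  have hd₁ := descents_le_length_sub_one l₁
  have hd₂ := descents_le_length_sub_one l₂
  have hasc : (l₁ ++ a :: l₂).length - 1 - (l₁ ++ a :: l₂).descents =
      (l₁.length - 1 - l₁.descents) + (l₂.length - 1 - l₂.descents) +
        if l₁ = [] then 0 else 1 := by
    rw [descents_append_cons_of_forall_lt h₁ h₂, length_append, length_cons]
    simp only [← length_eq_zero_iff]
    split_ifs <;> omega
  rw [descentWeight, hasc, descents_append_cons_of_forall_lt h₁ h₂, descentWeight, descentWeight]
  split_ifs <;> simp only [pow_add, pow_one, pow_zero, one_mul] <;> ac_rfl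

end List

noncomputable def permOfNodup {m : ℕ} (l : List (Fin m)) (hl : l.Nodup) (hlen : l.length = m) :
    Perm (Fin m) :=
  Equiv.ofBijective (fun i => l.get (i.cast hlen.symm)) <| Finite.injective_iff_bijective.mp <|
    (List.nodup_iff_injective_get.mp hl).comp (Fin.cast_injective _)

theorem ofFn_permOfNodup {m : ℕ} (l : List (Fin m)) (hl : l.Nodup) (hlen : l.length = m) :
    List.ofFn (permOfNodup l hl hlen) = l := by
  conv_rhs => rw [← List.ofFn_get l, List.ofFn_congr hlen]
  rfl

section SplitAtMax

variable {n : ℕ}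

def embedWord (s : Finset (Fin n)) (π : Perm (Fin #s)) : List (Fin (n + 1)) :=
  List.ofFn fun i => (s.orderEmbOfFin rfl (π i)).castSucc

theorem mem_embedWord {s : Finset (Fin n)} {π : Perm (Fin #s)} {j : Fin (n + 1)} :
    j ∈ embedWord s π ↔ ∃ i ∈ s, i.castSucc = j := by
  rw [embedWord, List.mem_ofFn,
    ← π.surjective.exists (p := fun k => (s.orderEmbOfFin rfl k).castSucc = j)]
  simp only [← mem_coe, ← s.range_orderEmbOfFin rfl, Set.exists_range_iff]

theorem castSucc_mem_embedWord {s : Finset (Fin n)} {π : Perm (Fin #s)} {i : Fin n} :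
    i.castSucc ∈ embedWord s π ↔ i ∈ s := by
  simp [mem_embedWord]

theorem lt_last_of_mem_embedWord {s : Finset (Fin n)} {π : Perm (Fin #s)} {j : Fin (n + 1)}
    (hj : j ∈ embedWord s π) : j < Fin.last n := by
  obtain ⟨i, -, rfl⟩ := mem_embedWord.mp hj
  exact Fin.castSucc_lt_last i

theorem length_embedWord (s : Finset (Fin n)) (π : Perm (Fin #s)) :
    (embedWord s π).length = #s :=
  List.length_ofFn

theorem embedWord_eq_nil_iff {s : Finset (Fin n)} {π : Perm (Fin #s)} :
    embedWord s π = [] ↔ #s = 0 :=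
  List.ofFn_eq_nil_iff

theorem nodup_embedWord (s : Finset (Fin n)) (π : Perm (Fin #s)) : (embedWord s π).Nodup :=
  List.nodup_ofFn.mpr <|
    (Fin.castSucc_injective n).comp ((s.orderEmbOfFin rfl).injective.comp π.injective)

theorem embedWord_injective (s : Finset (Fin n)) : Function.Injective (embedWord s) := by
  intro π π' h
  ext i : 1
  exact (s.orderEmbOfFin rfl).injective <|
    Fin.castSucc_injective n (congrFun (List.ofFn_injective h) i)

theorem descentWeight_embedWord {M : Type*} [CommMonoid M] (x y : M) (s : Finset (Fin n))
    (π : Perm (Fin #s)) :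
    (embedWord s π).descentWeight x y = (List.ofFn π).descentWeight x y := by
  rw [embedWord, List.ofFn_comp' π fun k => (s.orderEmbOfFin rfl k).castSucc,
    List.descentWeight_map x y (g := fun k => (s.orderEmbOfFin rfl k).castSucc)
      (Fin.strictMono_castSucc.comp (s.orderEmbOfFin rfl).strictMono)]

abbrev SplitData (n : ℕ) := Σ s : Finset (Fin n), Perm (Fin #s) × Perm (Fin #sᶜ)

namespace SplitData

def word (p : SplitData n) : List (Fin (n + 1)) :=
  embedWord p.1 p.2.1 ++ Fin.last n :: embedWord p.1ᶜ p.2.2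

theorem nodup_word (p : SplitData n) : p.word.Nodup := by
  refine List.nodup_append.mpr ⟨nodup_embedWord _ _, List.nodup_cons.mpr
    ⟨fun h => (lt_last_of_mem_embedWord h).ne rfl, nodup_embedWord _ _⟩, ?_⟩
  rintro a ha b hb rfl
  obtain ⟨i, hi, rfl⟩ := mem_embedWord.mp ha
  rcases List.mem_cons.mp hb with h | h
  · exact (Fin.castSucc_lt_last i).ne h
  · obtain ⟨i', hi', h'⟩ := mem_embedWord.mp h
    rw [Fin.castSucc_inj.mp h'] at hi'
    exact mem_compl.mp hi' hi

theorem length_word (p : SplitData n) : p.word.length = n + 1 := by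
  rw [word, List.length_append, List.length_cons, length_embedWord, length_embedWord,
    ← add_assoc, card_add_card_compl, Fintype.card_fin]

theorem word_injective : Function.Injective (word (n := n)) := by
  rintro ⟨s, π, ρ⟩ ⟨s', π', ρ'⟩ h
  obtain ⟨hleft, -, hright⟩ := (List.append_cons_inj_of_notMem
    (fun h => (lt_last_of_mem_embedWord h).ne rfl)
    (fun h => (lt_last_of_mem_embedWord h).ne rfl)).mp h
  dsimp only at hleft hright
  obtain rfl : s = s' := by
    ext i
    rw [← castSucc_mem_embedWord (π := π), hleft, castSucc_mem_embedWord]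
  rw [embedWord_injective _ hleft, embedWord_injective _ hright]

theorem descentWeight_word {M : Type*} [CommMonoid M] (x y : M) (p : SplitData n) :
    p.word.descentWeight x y =
      (if #p.1ᶜ = 0 then 1 else x) * (if #p.1 = 0 then 1 else y) *
        (List.ofFn p.2.1).descentWeight x y * (List.ofFn p.2.2).descentWeight x y := by
  rw [word, List.descentWeight_append_cons_of_forall_lt x y
    (fun _ hb => lt_last_of_mem_embedWord hb) (fun _ hb => lt_last_of_mem_embedWord hb),
    descentWeight_embedWord, descentWeight_embedWord]
  simp only [embedWord_eq_nil_iff]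

noncomputable def toPerm (p : SplitData n) : Perm (Fin (n + 1)) :=
  permOfNodup p.word p.nodup_word p.length_word

theorem ofFn_toPerm (p : SplitData n) : List.ofFn p.toPerm = p.word :=
  ofFn_permOfNodup _ _ _

theorem card_eq_factorial : Fintype.card (SplitData n) = (n + 1)! := by
  simp only [Fintype.card_sigma, Fintype.card_prod, Fintype.card_perm, Fintype.card_fin,
    card_compl]
  rw [← powerset_univ, sum_powerset_apply_card fun k => k ! * (n - k)!,
    card_univ, Fintype.card_fin, sum_congr rfl fun k hk => by
      rw [smul_eq_mul, ← mul_assoc, Nat.choose_mul_factorial_mul_factorial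
        (Nat.lt_succ_iff.mp (mem_range.mp hk))],
    sum_const, card_range, smul_eq_mul, Nat.factorial_succ]

theorem toPerm_bijective : Function.Bijective (toPerm (n := n)) := by
  refine (Fintype.bijective_iff_injective_and_card _).mpr ⟨fun p q h => word_injective ?_, ?_⟩
  · rw [← ofFn_toPerm, h, ofFn_toPerm]
  · rw [card_eq_factorial, Fintype.card_perm, Fintype.card_fin]

end SplitData

theorem sum_perm_ofFn_eq_sum_word {M : Type*} [AddCommMonoid M] (f : List (Fin (n + 1)) → M) :
    ∑ σ : Perm (Fin (n + 1)), f (List.ofFn σ) = ∑ p : SplitData n, f p.word :=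
  (Fintype.sum_bijective _ SplitData.toPerm_bijective _ _ fun p => by
    rw [SplitData.ofFn_toPerm]).symm

end SplitAtMax

noncomputable def descentPoly (m : ℕ) : MvPolynomial (Fin 2) ℚ :=
  ∑ σ : Perm (Fin m), (List.ofFn σ).descentWeight (X 0) (X 1)

theorem descentPoly_zero : descentPoly 0 = 1 := by
  simp [descentPoly, List.descentWeight, List.descents]

theorem descentPoly_succ (n : ℕ) :
    descentPoly (n + 1) = ∑ k ∈ range (n + 1), n.choose k • ((if k = n then 1 else X 0) *
      (if k = 0 then 1 else X 1) * descentPoly k * descentPoly (n - k)) := by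
  have hcard := sum_powerset_apply_card (x := (univ : Finset (Fin n))) fun k =>
    (if k = n then 1 else X 0) * (if k = 0 then 1 else X 1) * descentPoly k * descentPoly (n - k)
  rw [powerset_univ, card_univ, Fintype.card_fin] at hcard
  rw [← hcard, descentPoly, sum_perm_ofFn_eq_sum_word (fun l => l.descentWeight (X 0) (X 1)),
    Fintype.sum_sigma]
  refine sum_congr rfl fun s _ => ?_
  have hcompl : #sᶜ = n - #s := by rw [card_compl, Fintype.card_fin]
  have hs : #s ≤ n := by simpa using s.card_le_univ
  have hmax : #s = n ↔ #sᶜ = 0 := by omega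
  rw [← hcompl, descentPoly, descentPoly, mul_assoc, sum_mul_sum, mul_sum,
    Fintype.sum_prod_type]
  simp only [SplitData.descentWeight_word, hmax, mul_assoc, mul_sum]

theorem numDescents_eq_descents {m : ℕ} (σ : Perm (Fin m)) :
    numDescents m σ = (List.ofFn σ).descents :=
  (List.descents_ofFn σ).symm

theorem permutoH_eq_descentPoly (n : ℕ) : permutoH n = descentPoly (n + 1) := by
  have hdes (σ : Perm (Fin (n + 1))) : numDescents (n + 1) σ ∈ range (n + 1) := by
    have := List.descents_le_length_sub_one (List.ofFn σ)
    rw [List.length_ofFn] at this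
    rw [numDescents_eq_descents, mem_range]
    omega
  rw [descentPoly, ← sum_fiberwise_of_maps_to fun σ _ => hdes σ, permutoH]
  refine (sum_congr rfl fun k _ => ?_).symm
  calc ∑ σ with numDescents (n + 1) σ = k, (List.ofFn σ).descentWeight (X 0) (X 1)
      = ∑ σ with numDescents (n + 1) σ = k, (X 0 ^ k * X 1 ^ (n - k) : MvPolynomial (Fin 2) ℚ) := by
        refine sum_congr rfl fun σ hσ => ?_
        rw [List.descentWeight, List.length_ofFn, ← numDescents_eq_descents, (mem_filter.mp hσ).2,
          Nat.add_sub_cancel]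
    _ = _ := by
        rw [sum_const, ← eulerian, ← Nat.cast_smul_eq_nsmul ℚ, smul_eq_C_mul, mul_assoc]

theorem permutoH_recurrence (n : ℕ) (hn : 1 ≤ n) :
    permutoH n =
      (MvPolynomial.X 0 + MvPolynomial.X 1) * permutoH (n - 1) +
        MvPolynomial.X 0 * MvPolynomial.X 1 *
          ∑ i ∈ Finset.Icc 1 (n - 1),
            MvPolynomial.C ((n.choose i : ℚ)) * (permutoH (i - 1) * permutoH (n - i - 1)) := by
  obtain ⟨m, rfl⟩ : ∃ m, n = m + 1 := ⟨n - 1, by omega⟩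
  have hP (k : ℕ) (hk : 0 < k) : descentPoly k = permutoH (k - 1) := by
    rw [permutoH_eq_descentPoly, Nat.sub_add_cancel hk]
  rw [permutoH_eq_descentPoly, descentPoly_succ, range_eq_Ico,
    sum_eq_sum_Ico_succ_bot (by omega), sum_Ico_succ_top (by omega),
    Nat.add_sub_cancel]
  have hmid : ∀ k ∈ Ico 1 (m + 1), (m + 1).choose k • ((if k = m + 1 then 1 else X 0) *
      (if k = 0 then 1 else X 1) * descentPoly k * descentPoly (m + 1 - k)) =
        X 0 * X 1 * (C ((m + 1).choose k : ℚ) * (permutoH (k - 1) * permutoH (m + 1 - k - 1))) := by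
    intro k hk
    obtain ⟨hk₁, hk₂⟩ := mem_Ico.mp hk
    rw [if_neg (by omega), if_neg (by omega), hP k (by omega), hP (m + 1 - k) (by omega),
      ← Nat.cast_smul_eq_nsmul ℚ, smul_eq_C_mul]
    ring
  rw [zero_add, sum_congr rfl hmid, ← mul_sum, Ico_add_one_right_eq_Icc]
  simp only [Nat.choose_zero_right, Nat.choose_self, one_smul, Nat.right_eq_add,
    Nat.add_eq_zero_iff, one_ne_zero, and_false, ↓reduceIte, mul_one, one_mul, descentPoly_zero,
    tsub_zero, tsub_self, hP (m + 1) m.succ_pos, add_tsub_cancel_right]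
  ring
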